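/- Σ_{n≥0} (6n + 1) · C(2n,n)³ / 256^n = 4/π, where the sum is over all natural numbers n. -/

import Mathlib

/-!
Wilf–Zeilberger method. With
`T(n,k) = C(2n,n)³ C(2k,k)² / (C(n+k,k)² 256ⁿ 16ᵏ)`, the functions `F = (6n+4k+1) T` and
`G = 8n T` satisfy `F(n,k+1) - F(n,k) = G(n+1,k) - G(n,k)`. Since `G(0,k) = 0` and `G(n,k) → 0`
as `n → ∞`, the column sums `∑ₙ F(n,k)` do not depend on `k`; the column `k = 0` is the series.
As `k → ∞`, every term with `n ≥ 1` tends to `0` under the summable majorant `(6n+5) 4⁻ⁿ`, while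
`F(0,k) = (4k+1) / ((2k+1) W k)`, with `W` the Wallis product, tends to `2 / (π/2) = 4/π`.
-/

open Filter Real Topology
open scoped Nat

theorem tsum_eq_tsum_zero_of_wz {E : Type*} [AddCommGroup E] [TopologicalSpace E]
    [IsTopologicalAddGroup E] [T2Space E] {F G : ℕ → ℕ → E}
    (hFG : ∀ n k, F n (k + 1) + G n k = F n k + G (n + 1) k)
    (hG₀ : ∀ k, G 0 k = 0) (hG : ∀ k, Tendsto (G · k) atTop (𝓝 0))
    (hF : ∀ k, Summable (F · k)) (k : ℕ) :
    ∑' n, F n k = ∑' n, F n 0 := by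
  induction k with
  | zero => rfl
  | succ k ih =>
    have hpartial : ∀ N, ∑ n ∈ Finset.range N, F n (k + 1) =
        ∑ n ∈ Finset.range N, F n k + G N k := by
      intro N
      induction N with
      | zero => simp [hG₀]
      | succ N ihN =>
        rw [Finset.sum_range_succ, Finset.sum_range_succ, ihN, add_assoc, add_comm (G N k), hFG,
          add_assoc]
    have hlim : Tendsto (fun N ↦ ∑ n ∈ Finset.range N, F n (k + 1)) atTop
        (𝓝 (∑' n, F n k)) := by
      simpa only [hpartial, add_zero] using (hF k).hasSum.tendsto_sum_nat.add (hG k)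
    rw [← ih, tendsto_nhds_unique (hF (k + 1)).hasSum.tendsto_sum_nat hlim]

noncomputable def wzTerm (n k : ℕ) : ℝ :=
  (n.centralBinom : ℝ) ^ 3 * (k.centralBinom : ℝ) ^ 2 /
    (((n + k).choose k : ℝ) ^ 2 * 256 ^ n * 16 ^ k)

noncomputable def wzF (n k : ℕ) : ℝ := (6 * n + 4 * k + 1) * wzTerm n k

noncomputable def wzG (n k : ℕ) : ℝ := 8 * n * wzTerm n k

lemma cast_centralBinom_succ (n : ℕ) :
    ((n + 1).centralBinom : ℝ) = 2 * (2 * n + 1) * n.centralBinom / (n + 1) := by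
  rw [eq_div_iff (by positivity), mul_comm]
  exact_mod_cast n.succ_mul_centralBinom_succ

lemma cast_choose_succ_add (n k : ℕ) :
    ((n + 1 + k).choose k : ℝ) = (n + k + 1) * (n + k).choose k / (n + 1) := by
  rw [eq_div_iff (by positivity)]
  have h := Nat.choose_mul_succ_eq (n + k) k
  rw [show n + k + 1 - k = n + 1 by omega, show n + k + 1 = n + 1 + k by omega] at h
  have h' : ((n + k).choose k : ℝ) * (n + 1 + k) = (n + 1 + k).choose k * (n + 1) := by
    exact_mod_cast h
  linear_combination -h'

lemma cast_choose_add_succ (n k : ℕ) :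
    ((n + (k + 1)).choose (k + 1) : ℝ) = (n + k + 1) * (n + k).choose k / (k + 1) := by
  rw [eq_div_iff (by positivity)]
  exact_mod_cast (Nat.add_one_mul_choose_eq (n + k) k).symm

lemma wzTerm_succ_left (n k : ℕ) :
    32 * (n + 1) * (n + k + 1) ^ 2 * wzTerm (n + 1) k = (2 * n + 1) ^ 3 * wzTerm n k := by
  have := (n + k).choose_pos (Nat.le_add_left k n)
  unfold wzTerm
  rw [cast_centralBinom_succ, cast_choose_succ_add]
  field_simp
  ring

lemma wzTerm_succ_right (n k : ℕ) :
    4 * (n + k + 1) ^ 2 * wzTerm n (k + 1) = (2 * k + 1) ^ 2 * wzTerm n k := by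
  have := (n + k).choose_pos (Nat.le_add_left k n)
  unfold wzTerm
  rw [cast_centralBinom_succ k, cast_choose_add_succ]
  field_simp
  ring

lemma wzF_succ_add_wzG (n k : ℕ) : wzF n (k + 1) + wzG n k = wzF n k + wzG (n + 1) k := by
  have h : (4 * ((n : ℝ) + k + 1) ^ 2) ≠ 0 := by positivity
  refine mul_left_cancel₀ h ?_
  unfold wzF wzG
  push_cast
  linear_combination (6 * (n : ℝ) + 4 * k + 5) * wzTerm_succ_right n k - wzTerm_succ_left n k

namespace Real.Wallis

lemma one_le_W (k : ℕ) : 1 ≤ W k := by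
  induction k with
  | zero => simp [W]
  | succ k ih =>
    rw [W_succ]
    refine one_le_mul_of_one_le_of_one_le ih ?_
    rw [div_mul_div_comm, one_le_div₀ (by positivity)]
    nlinarith

lemma centralBinom_sq_mul_W (k : ℕ) :
    (2 * k + 1) * (k.centralBinom : ℝ) ^ 2 * W k = 16 ^ k := by
  have hfac : (k.centralBinom : ℝ) * k ! * k ! = (2 * k)! := by
    have h := Nat.choose_mul_factorial_mul_factorial (Nat.le_mul_of_pos_left k two_pos)
    rw [show 2 * k - k = k by omega] at h
    exact_mod_cast h
  have := k.centralBinom_pos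
  rw [W_eq_factorial_ratio, ← hfac, pow_mul]
  field_simp
  norm_num

end Real.Wallis

lemma wzF_zero_left (k : ℕ) : wzF 0 k = (4 * k + 1) / (2 * k + 1) / Wallis.W k := by
  have hW := Wallis.centralBinom_sq_mul_W k
  rw [eq_div_iff (Wallis.W_pos k).ne', eq_div_iff (by positivity)]
  simp only [wzF, wzTerm, Nat.cast_zero, zero_add, Nat.choose_self, Nat.centralBinom_zero]
  field_simp
  linear_combination (4 * (k : ℝ) + 1) * hW

lemma wzF_zero_right (n : ℕ) :
    wzF n 0 = (6 * n + 1) * (n.centralBinom : ℝ) ^ 3 / 256 ^ n := by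
  simp [wzF, wzTerm, mul_div_assoc]

lemma wzTerm_nonneg (n k : ℕ) : 0 ≤ wzTerm n k := by
  unfold wzTerm; positivity

lemma wzTerm_le (n k : ℕ) : wzTerm n k ≤ (1 / 4) ^ n / ((n + k).choose k : ℝ) ^ 2 := by
  have hb := (n + k).choose_pos (Nat.le_add_left k n)
  have hcb (m : ℕ) : (m.centralBinom : ℝ) ≤ 4 ^ m := by
    exact_mod_cast m.centralBinom_le_four_pow
  have h256 : (256 : ℝ) ^ n = (4 ^ n) ^ 4 := by rw [← pow_mul, mul_comm, pow_mul]; norm_num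
  have h16 : (16 : ℝ) ^ k = (4 ^ k) ^ 2 := by rw [← pow_mul, mul_comm, pow_mul]; norm_num
  calc wzTerm n k
      ≤ (4 ^ n) ^ 3 * (4 ^ k) ^ 2 / (((n + k).choose k : ℝ) ^ 2 * 256 ^ n * 16 ^ k) := by
        unfold wzTerm; gcongr <;> exact hcb _
    _ = (1 / 4) ^ n / ((n + k).choose k : ℝ) ^ 2 := by
        rw [h256, h16, div_pow, one_pow]
        field_simp

lemma wzTerm_le_pow (n k : ℕ) : wzTerm n k ≤ (1 / 4) ^ n := by
  refine (wzTerm_le n k).trans (div_le_self (by positivity) (one_le_pow₀ ?_))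
  exact_mod_cast (n + k).choose_pos (Nat.le_add_left k n)

lemma wzF_le_of_pos {n : ℕ} (hn : 0 < n) (k : ℕ) :
    wzF n k ≤ (6 * n + 5) * (1 / 4) ^ n / (k + 1) := by
  have hchoose : (k + 1 : ℝ) ≤ (n + k).choose k := by
    have h := Nat.choose_le_choose k (show k + 1 ≤ n + k by omega)
    rw [Nat.choose_succ_self_right] at h
    exact_mod_cast h
  have hcoeff : (6 * n + 4 * k + 1 : ℝ) ≤ (6 * n + 5) * (k + 1) := by
    nlinarith [(Nat.cast_nonneg n : (0 : ℝ) ≤ n), (Nat.cast_nonneg k : (0 : ℝ) ≤ k)]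
  calc wzF n k ≤ ((6 * n + 5) * (k + 1)) * ((1 / 4) ^ n / (k + 1) ^ 2) := by
        unfold wzF
        exact mul_le_mul hcoeff ((wzTerm_le n k).trans (by gcongr)) (wzTerm_nonneg n k)
          (by positivity)
    _ = (6 * n + 5) * (1 / 4) ^ n / (k + 1) := by
        field_simp

lemma wzF_zero_left_le (k : ℕ) : wzF 0 k ≤ 2 := by
  rw [wzF_zero_left, div_le_iff₀ (Wallis.W_pos k), div_le_iff₀ (by positivity)]
  nlinarith [Wallis.one_le_W k, (Nat.cast_nonneg k : (0 : ℝ) ≤ k)]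

lemma wzF_nonneg (n k : ℕ) : 0 ≤ wzF n k :=
  mul_nonneg (by positivity) (wzTerm_nonneg n k)

lemma wzF_le (n k : ℕ) : wzF n k ≤ (6 * n + 5) * (1 / 4) ^ n := by
  rcases n.eq_zero_or_pos with rfl | hn
  · simpa using (wzF_zero_left_le k).trans (by norm_num)
  · refine (wzF_le_of_pos hn k).trans (div_le_self (by positivity) ?_)
    simp

lemma summable_wzF_bound : Summable fun n : ℕ ↦ (6 * n + 5) * (1 / 4 : ℝ) ^ n := by
  have h := summable_pow_mul_geometric_of_norm_lt_one 1 (show ‖(1 / 4 : ℝ)‖ < 1 by norm_num)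
  have h' := summable_geometric_of_lt_one (by norm_num : (0 : ℝ) ≤ 1 / 4) (by norm_num)
  simpa [add_mul, mul_assoc] using (h.mul_left 6).add (h'.mul_left 5)

lemma summable_wzF (k : ℕ) : Summable (wzF · k) :=
  summable_wzF_bound.of_nonneg_of_le (wzF_nonneg · k) (wzF_le · k)

lemma tendsto_wzF_zero_left : Tendsto (wzF 0) atTop (𝓝 (4 / π)) := by
  have hratio : Tendsto (fun k : ℕ ↦ (4 * k + 1 : ℝ) / (2 * k + 1)) atTop (𝓝 2) := by
    have hinv : Tendsto (fun k : ℕ ↦ (2 * k + 1 : ℝ)⁻¹) atTop (𝓝 0) :=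
      tendsto_inv_atTop_zero.comp <| tendsto_atTop_add_const_right _ _ <|
        tendsto_natCast_atTop_atTop.const_mul_atTop two_pos
    have h := (tendsto_const_nhds (x := (2 : ℝ))).sub hinv
    rw [sub_zero] at h
    refine h.congr fun k ↦ ?_
    field_simp
    ring
  have h := hratio.div Wallis.tendsto_W_nhds_pi_div_two (by positivity)
  rw [show (2 : ℝ) / (π / 2) = 4 / π by ring] at h
  exact h.congr fun k ↦ (wzF_zero_left k).symm

lemma tendsto_wzF_of_pos {n : ℕ} (hn : 0 < n) : Tendsto (wzF n) atTop (𝓝 0) := by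
  have hbound : Tendsto (fun k : ℕ ↦ (6 * n + 5) * (1 / 4 : ℝ) ^ n / (k + 1)) atTop (𝓝 0) :=
    tendsto_const_nhds.div_atTop (tendsto_atTop_add_const_right _ _ tendsto_natCast_atTop_atTop)
  exact squeeze_zero (wzF_nonneg n) (wzF_le_of_pos hn) hbound

lemma wzG_zero_left (k : ℕ) : wzG 0 k = 0 := by
  simp [wzG]

lemma tendsto_wzG (k : ℕ) : Tendsto (wzG · k) atTop (𝓝 0) := by
  have hbound : Tendsto (fun n : ℕ ↦ 8 * n * (1 / 4 : ℝ) ^ n) atTop (𝓝 0) := by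
    simpa [mul_assoc] using (tendsto_self_mul_const_pow_of_lt_one
      (by norm_num : (0 : ℝ) ≤ 1 / 4) (by norm_num)).const_mul 8
  exact squeeze_zero (fun n ↦ mul_nonneg (by positivity) (wzTerm_nonneg n k))
    (fun n ↦ mul_le_mul_of_nonneg_left (wzTerm_le_pow n k) (by positivity)) hbound

theorem ramanujan_pi_formula_35 :
    ∑' n : ℕ, (6 * n + 1) * (n.centralBinom : ℝ) ^ 3 / 256 ^ n = 4 / Real.pi := by
  have hlim : ∀ n, Tendsto (wzF n) atTop (𝓝 (if n = 0 then 4 / π else 0)) := by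
    rintro (_ | n)
    · simpa using tendsto_wzF_zero_left
    · simpa using tendsto_wzF_of_pos n.succ_pos
  have hsum := tendsto_tsum_of_dominated_convergence summable_wzF_bound hlim
    (Eventually.of_forall fun k n ↦ by
      rw [Real.norm_of_nonneg (wzF_nonneg n k)]; exact wzF_le n k)
  simp only [tsum_eq_tsum_zero_of_wz wzF_succ_add_wzG wzG_zero_left tendsto_wzG summable_wzF,
    tsum_ite_eq] at hsum
  simpa [wzF_zero_right] using tendsto_nhds_unique tendsto_const_nhds hsum
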